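/- arXiv:0904.1997 — 3 statements merged into one kernel-verified Lean document; each statement's English description precedes it below -/
import Mathlib

section
/- Classical morphisms between classical structures form a category: the identity 𝟙_X is classical relative to any classical structure on X, and if f : X ⟶ Y and g : Y ⟶ Z are classical morphisms between classical structures then f ≫ g : X ⟶ Z is classical. -/
open CategoryTheory MonoidalCategory

universe v u

variable {C : Type u} [Category.{v} C] [MonoidalCategory C] [SymmetricCategory C]

/-- A dagger structure on a symmetric monoidal category: an involutive,
identity-on-objects, contravariant functor that coherently preserves the
symmetric monoidal structure. -/
structure Dagger (C : Type u) [Category.{v} C] [MonoidalCategory C]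
    [SymmetricCategory C] where
  dag : ∀ {A B : C}, (A ⟶ B) → (B ⟶ A)
  dag_comp : ∀ {A B E : C} (f : A ⟶ B) (g : B ⟶ E), dag (f ≫ g) = dag g ≫ dag f
  dag_id : ∀ A : C, dag (𝟙 A) = 𝟙 A
  dag_dag : ∀ {A B : C} (f : A ⟶ B), dag (dag f) = f
  dag_tensor : ∀ {A B A' B' : C} (f : A ⟶ B) (g : A' ⟶ B'),
    dag (f ⊗ₘ g) = dag f ⊗ₘ dag g
  dag_assoc : ∀ A B E : C, dag (α_ A B E).hom = (α_ A B E).inv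
  dag_lUnit : ∀ A : C, dag (λ_ A).hom = (λ_ A).inv
  dag_rUnit : ∀ A : C, dag (ρ_ A).hom = (ρ_ A).inv
  dag_braid : ∀ A B : C, dag (β_ A B).hom = (β_ A B).inv

/-- Positivity of an endomorphism: `e = g† ≫ g` for some `g : W ⟶ A`. -/
def Dagger.IsPositive (D : Dagger C) {A : C} (e : A ⟶ A) : Prop :=
  ∃ (W : C) (g : W ⟶ A), e = D.dag g ≫ g

/-- A classical structure: a commutative monoid object which, together with the
daggers of its multiplication and unit, is a special Frobenius algebra. -/
structure ClassicalStructure (D : Dagger C) (X : C) where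
  mul : X ⊗ X ⟶ X
  unit : 𝟙_ C ⟶ X
  mul_assoc' : (α_ X X X).hom ≫ (𝟙 X ⊗ₘ mul) ≫ mul = (mul ⊗ₘ 𝟙 X) ≫ mul
  one_mul' : (unit ⊗ₘ 𝟙 X) ≫ mul = (λ_ X).hom
  mul_one' : (𝟙 X ⊗ₘ unit) ≫ mul = (ρ_ X).hom
  mul_comm' : (β_ X X).hom ≫ mul = mul
  frobenius' : (𝟙 X ⊗ₘ D.dag mul) ≫ (α_ X X X).inv ≫ (mul ⊗ₘ 𝟙 X) = mul ≫ D.dag mul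
  special' : D.dag mul ≫ mul = 𝟙 X

namespace ClassicalStructure

variable {D : Dagger C}

/-- The comultiplication `Δ := ∇†`. -/
def comul {X : C} (S : ClassicalStructure D X) : X ⟶ X ⊗ X := D.dag S.mul

/-- The counit `⊤ := ⊥†`. -/
def counit {X : C} (S : ClassicalStructure D X) : X ⟶ 𝟙_ C := D.dag S.unit

/-- The induced Bell state `η := ⊥ ≫ Δ`. -/
def eta {X : C} (S : ClassicalStructure D X) : 𝟙_ C ⟶ X ⊗ X := S.unit ≫ S.comul

/-- The induced Bell costate `ε := ∇ ≫ ⊤`. -/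
def eps {X : C} (S : ClassicalStructure D X) : X ⊗ X ⟶ 𝟙_ C := S.mul ≫ S.counit

/-- The decoherence `Ξ := ∇ ≫ Δ`. -/
def Xi {X : C} (S : ClassicalStructure D X) : X ⊗ X ⟶ X ⊗ X := S.mul ≫ S.comul

end ClassicalStructure

/-- A morphism `f : X ⟶ Y` between classical structures is classical if
`(Δ_X ⊗ 𝟙_Y) ≫ (𝟙_X ⊗ f ⊗ 𝟙_Y) ≫ (𝟙_X ⊗ ∇_Y)` is positive. -/
def IsClassical {X Y : C} (D : Dagger C) (XS : ClassicalStructure D X)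
    (YS : ClassicalStructure D Y) (f : X ⟶ Y) : Prop :=
  D.IsPositive ((XS.comul ⊗ₘ 𝟙 Y) ≫ ((𝟙 X ⊗ₘ f) ⊗ₘ 𝟙 Y) ≫ (α_ X Y Y).hom ≫ (𝟙 X ⊗ₘ YS.mul))

/-- The conjugate `f_* := (η_Y ⊗ 𝟙_X) ≫ (𝟙_Y ⊗ f† ⊗ 𝟙_X) ≫ (𝟙_Y ⊗ ε_X)`. -/
def conjugate {X Y : C} (D : Dagger C) (XS : ClassicalStructure D X)
    (YS : ClassicalStructure D Y) (f : X ⟶ Y) : X ⟶ Y :=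
  (λ_ X).inv ≫ (YS.eta ⊗ₘ 𝟙 X) ≫ (α_ Y Y X).hom ≫ (𝟙 Y ⊗ₘ (D.dag f ⊗ₘ 𝟙 X)) ≫
    (𝟙 Y ⊗ₘ XS.eps) ≫ (ρ_ Y).hom

/-- The convolution `f ⋆ g := Δ_X ≫ (f_* ⊗ g) ≫ ∇_Y`. -/
def convol {X Y : C} (D : Dagger C) (XS : ClassicalStructure D X)
    (YS : ClassicalStructure D Y) (f g : X ⟶ Y) : X ⟶ Y :=
  XS.comul ≫ (conjugate D XS YS f ⊗ₘ g) ≫ YS.mul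

/-- A relation is a convolution-idempotent: `r = r ⋆ r`. -/
def IsRelation {X Y : C} (D : Dagger C) (XS : ClassicalStructure D X)
    (YS : ClassicalStructure D Y) (r : X ⟶ Y) : Prop :=
  r = convol D XS YS r r

/-- Single-valuedness: `r ≫ Δ_Y = Δ_X ≫ (r ⊗ r)`. -/
def SingleValued {X Y : C} (D : Dagger C) (XS : ClassicalStructure D X)
    (YS : ClassicalStructure D Y) (r : X ⟶ Y) : Prop :=
  r ≫ YS.comul = XS.comul ≫ (r ⊗ₘ r)

/-- Totality: `r ≫ ⊤_Y = ⊤_X`. -/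
def TotalRel {X Y : C} (D : Dagger C) (XS : ClassicalStructure D X)
    (YS : ClassicalStructure D Y) (r : X ⟶ Y) : Prop :=
  r ≫ YS.counit = XS.counit

/-- A function is a single-valued total relation. -/
def IsFunctionRel {X Y : C} (D : Dagger C) (XS : ClassicalStructure D X)
    (YS : ClassicalStructure D Y) (r : X ⟶ Y) : Prop :=
  IsRelation D XS YS r ∧ SingleValued D XS YS r ∧ TotalRel D XS YS r

/-- The middle-four interchange `(X ⊗ Y) ⊗ (Z ⊗ W) ⟶ (X ⊗ Z) ⊗ (Y ⊗ W)`
built from associators and the braiding. -/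
def midSwap (X Y Z W : C) : (X ⊗ Y) ⊗ (Z ⊗ W) ⟶ (X ⊗ Z) ⊗ (Y ⊗ W) :=
  (α_ X Y (Z ⊗ W)).hom ≫ (𝟙 X ⊗ₘ (α_ Y Z W).inv) ≫ (𝟙 X ⊗ₘ ((β_ Y Z).hom ⊗ₘ 𝟙 W)) ≫
    (𝟙 X ⊗ₘ (α_ Z Y W).hom) ≫ (α_ X Z (Y ⊗ W)).inv

/-- The multiplication `∇_{X⊗Y} := (𝟙_X ⊗ β_{Y,X} ⊗ 𝟙_Y) ≫ (∇_X ⊗ ∇_Y)` of the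
tensor of two classical structures. -/
def tensorMul {X Y : C} {D : Dagger C} (XS : ClassicalStructure D X)
    (YS : ClassicalStructure D Y) : (X ⊗ Y) ⊗ (X ⊗ Y) ⟶ X ⊗ Y :=
  midSwap X Y X Y ≫ (XS.mul ⊗ₘ YS.mul)

/-- The unit `⊥_{X⊗Y} := ⊥_X ⊗ ⊥_Y` of the tensor of two classical structures. -/
def tensorUnit'' {X Y : C} {D : Dagger C} (XS : ClassicalStructure D X)
    (YS : ClassicalStructure D Y) : 𝟙_ C ⟶ X ⊗ Y :=
  (λ_ (𝟙_ C)).inv ≫ (XS.unit ⊗ₘ YS.unit)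

/-- Complete positivity of `g : X ⊗ X ⟶ Y ⊗ Y` relative to the self-dual compact
structures induced by the classical structures:
`(𝟙_X ⊗ η_X ⊗ 𝟙_Y) ≫ (𝟙_X ⊗ g ⊗ 𝟙_Y) ≫ (𝟙_{X⊗Y} ⊗ ε_Y)` is positive. -/
def IsCP {X Y : C} (D : Dagger C) (XS : ClassicalStructure D X)
    (YS : ClassicalStructure D Y) (g : X ⊗ X ⟶ Y ⊗ Y) : Prop :=
  D.IsPositive ((𝟙 X ⊗ₘ (λ_ Y).inv) ≫ (𝟙 X ⊗ₘ (XS.eta ⊗ₘ 𝟙 Y)) ≫ (𝟙 X ⊗ₘ (g ⊗ₘ 𝟙 Y)) ≫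
    (𝟙 X ⊗ₘ (α_ Y Y Y).hom) ≫ (α_ X Y (Y ⊗ Y)).inv ≫ (𝟙 (X ⊗ Y) ⊗ₘ YS.eps) ≫
    (ρ_ (X ⊗ Y)).hom)

/-- A stochastic morphism: classical and total. -/
def Stochastic {X Y : C} (D : Dagger C) (XS : ClassicalStructure D X)
    (YS : ClassicalStructure D Y) (s : X ⟶ Y) : Prop :=
  IsClassical D XS YS s ∧ TotalRel D XS YS s

/-- A doubly stochastic morphism: both `s` and `s†` are stochastic. -/
def DoublyStochastic {X Y : C} (D : Dagger C) (XS : ClassicalStructure D X)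
    (YS : ClassicalStructure D Y) (s : X ⟶ Y) : Prop :=
  Stochastic D XS YS s ∧ Stochastic D YS XS (D.dag s)

/-!
Write `M f := (Δ_X ⊗ 𝟙) ≫ (𝟙 ⊗ f ⊗ 𝟙) ≫ (𝟙 ⊗ ∇_Y)`, so that `f` is classical iff `M f` is
positive. By the Frobenius law `M (𝟙 X) = ∇ ≫ Δ = Δ† ≫ Δ`. For composites,
`M (f ≫ g) = c† ≫ (M f ⊗ M g) ≫ c` with `c := 𝟙_X ⊗ ε_Y ⊗ 𝟙_Z`: in the middle, `η_Y`, `∇_Y`, `Δ_Y`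
and `ε_Y` form a connected diagram with one input and one output, which the Frobenius law,
associativity and specialness reduce to the identity wire. Positive endomorphisms are closed
under `⊗` and under conjugation `e ↦ c† ≫ e ≫ c`.
-/

namespace Dagger

variable (D : Dagger C)

lemma dag_injective {A B : C} {f g : A ⟶ B} (h : D.dag f = D.dag g) : f = g := by
  rw [← D.dag_dag f, h, D.dag_dag]

lemma dag_assoc_inv (A B E : C) : D.dag (α_ A B E).inv = (α_ A B E).hom := by
  rw [← D.dag_assoc, D.dag_dag]

lemma dag_lUnit_inv (A : C) : D.dag (λ_ A).inv = (λ_ A).hom := by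
  rw [← D.dag_lUnit, D.dag_dag]

lemma dag_whiskerLeft (X : C) {A B : C} (f : A ⟶ B) : D.dag (X ◁ f) = X ◁ D.dag f := by
  rw [← id_tensorHom, D.dag_tensor, D.dag_id, id_tensorHom]

lemma dag_whiskerRight {A B : C} (f : A ⟶ B) (X : C) : D.dag (f ▷ X) = D.dag f ▷ X := by
  rw [← tensorHom_id, D.dag_tensor, D.dag_id, tensorHom_id]

lemma isPositive_dag_comp_self {A B : C} (g : A ⟶ B) : D.IsPositive (D.dag g ≫ g) :=
  ⟨A, g, rfl⟩

variable {D}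

lemma IsPositive.tensor {A B : C} {e : A ⟶ A} {e' : B ⟶ B} (he : D.IsPositive e)
    (he' : D.IsPositive e') : D.IsPositive (e ⊗ₘ e') := by
  obtain ⟨W, g, rfl⟩ := he
  obtain ⟨W', g', rfl⟩ := he'
  rw [← tensorHom_comp_tensorHom, ← D.dag_tensor]
  exact D.isPositive_dag_comp_self _

lemma IsPositive.dag_comp_comp {A B : C} {e : A ⟶ A} (he : D.IsPositive e) (c : A ⟶ B) :
    D.IsPositive (D.dag c ≫ e ≫ c) := by
  obtain ⟨W, g, rfl⟩ := he
  simpa only [D.dag_comp, Category.assoc] using D.isPositive_dag_comp_self (g ≫ c)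

end Dagger

namespace ClassicalStructure

variable {D : Dagger C} {X : C} (S : ClassicalStructure D X)

lemma dag_comul : D.dag S.comul = S.mul := D.dag_dag _

lemma comul_mul : S.comul ≫ S.mul = 𝟙 X := S.special'

lemma mul_assoc : (α_ X X X).hom ≫ (X ◁ S.mul) ≫ S.mul = (S.mul ▷ X) ≫ S.mul := by
  simpa only [id_tensorHom, tensorHom_id] using S.mul_assoc'

lemma whiskerLeft_unit_mul : (X ◁ S.unit) ≫ S.mul = (ρ_ X).hom := by
  simpa only [id_tensorHom] using S.mul_one'

lemma comul_whiskerRight_counit : S.comul ≫ (S.counit ▷ X) = (λ_ X).inv := by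
  apply D.dag_injective
  rw [D.dag_comp, D.dag_whiskerRight, dag_comul, D.dag_lUnit_inv, counit, D.dag_dag]
  simpa only [tensorHom_id] using S.one_mul'

lemma whiskerLeft_comul_mul :
    (X ◁ S.comul) ≫ (α_ X X X).inv ≫ (S.mul ▷ X) = S.mul ≫ S.comul := by
  simpa only [comul, id_tensorHom, tensorHom_id] using S.frobenius'

lemma whiskerRight_comul_mul :
    (S.comul ▷ X) ≫ (α_ X X X).hom ≫ (X ◁ S.mul) = S.mul ≫ S.comul := by
  apply D.dag_injective
  simp only [D.dag_comp, D.dag_whiskerLeft, D.dag_whiskerRight, D.dag_assoc, dag_comul,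
    Category.assoc]
  exact S.whiskerLeft_comul_mul

lemma eta_mul : S.eta ≫ S.mul = S.unit := by
  rw [eta, Category.assoc, comul_mul, Category.comp_id]

lemma whiskerLeft_comul_eps :
    (X ◁ S.comul) ≫ (α_ X X X).inv ≫ (S.eps ▷ X) ≫ (λ_ X).hom = S.mul := by
  rw [eps, comp_whiskerRight, Category.assoc, reassoc_of% S.whiskerLeft_comul_mul,
    reassoc_of% S.comul_whiskerRight_counit, Iso.inv_hom_id, Category.comp_id]

lemma dag_eps : D.dag S.eps = S.eta := by
  rw [eps, eta, D.dag_comp, counit, D.dag_dag, comul]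

lemma snake_mul_comul :
    (ρ_ X).inv ≫ (X ◁ S.eta) ≫ (α_ X X X).inv ≫ (S.mul ▷ X) ≫ (X ◁ S.comul) ≫
      (α_ X X X).inv ≫ (S.eps ▷ X) ≫ (λ_ X).hom = 𝟙 X := by
  rw [S.whiskerLeft_comul_eps, ← S.mul_assoc, Iso.inv_hom_id_assoc,
    ← MonoidalCategory.whiskerLeft_comp_assoc, eta_mul, whiskerLeft_unit_mul, Iso.inv_hom_id]

lemma snake_mul_comul_comp {B : C} (k : X ⊗ B ⟶ B) :
    (X ◁ ((λ_ B).inv ≫ (S.eta ▷ B) ≫ (α_ X X B).hom)) ≫ (α_ X X (X ⊗ B)).inv ≫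
      (S.mul ▷ (X ⊗ B)) ≫ (X ◁ ((S.comul ▷ B) ≫ (α_ X X B).hom ≫ (X ◁ k))) ≫
      (α_ X X B).inv ≫ (S.eps ▷ B) ≫ (λ_ B).hom = k := by
  have hk : (X ◁ X ◁ k) ≫ (α_ X X B).inv ≫ (S.eps ▷ B) ≫ (λ_ B).hom =
      (α_ X X (X ⊗ B)).inv ≫ (S.eps ▷ (X ⊗ B)) ≫ (λ_ (X ⊗ B)).hom ≫ k := by
    rw [associator_inv_naturality_right_assoc, whisker_exchange_assoc, leftUnitor_naturality]
  calc _ = ((ρ_ X).inv ≫ (X ◁ S.eta) ≫ (α_ X X X).inv ≫ (S.mul ▷ X) ≫ (X ◁ S.comul) ≫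
      (α_ X X X).inv ≫ (S.eps ▷ X) ≫ (λ_ X).hom) ▷ B ≫ k := by
        simp only [MonoidalCategory.whiskerLeft_comp, Category.assoc, hk]
        monoidal
    _ = k := by rw [snake_mul_comul, id_whiskerRight, Category.id_comp]

end ClassicalStructure

section CopyApplyMul

variable {D : Dagger C}

def copyApplyMul {X Y : C} (XS : ClassicalStructure D X) (YS : ClassicalStructure D Y)
    (f : X ⟶ Y) : X ⊗ Y ⟶ X ⊗ Y :=
  (XS.comul ▷ Y) ≫ ((X ◁ f) ▷ Y) ≫ (α_ X Y Y).hom ≫ (X ◁ YS.mul)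

lemma isClassical_iff {X Y : C} (XS : ClassicalStructure D X) (YS : ClassicalStructure D Y)
    (f : X ⟶ Y) : IsClassical D XS YS f ↔ D.IsPositive (copyApplyMul XS YS f) := by
  simp only [IsClassical, copyApplyMul, id_tensorHom, tensorHom_id]

lemma copyApplyMul_id {X : C} (XS : ClassicalStructure D X) :
    copyApplyMul XS XS (𝟙 X) = D.dag XS.comul ≫ XS.comul := by
  rw [XS.dag_comul, ← XS.whiskerRight_comul_mul, copyApplyMul, MonoidalCategory.whiskerLeft_id,
    id_whiskerRight, Category.id_comp]

lemma copyApplyMul_comp {X Y Z : C} (XS : ClassicalStructure D X) (YS : ClassicalStructure D Y)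
    (ZS : ClassicalStructure D Z) (f : X ⟶ Y) (g : Y ⟶ Z) :
    let c := (α_ X Y (Y ⊗ Z)).hom ≫ (X ◁ ((α_ Y Y Z).inv ≫ (YS.eps ▷ Z) ≫ (λ_ Z).hom))
    copyApplyMul XS ZS (f ≫ g) =
      D.dag c ≫ (copyApplyMul XS YS f ⊗ₘ copyApplyMul YS ZS g) ≫ c := by
  intro c
  set u := (λ_ Z).inv ≫ (YS.eta ▷ Z) ≫ (α_ Y Y Z).hom with hu
  have hc : D.dag c = (X ◁ u) ≫ (α_ X Y (Y ⊗ Z)).inv := by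
    simp only [c, u, D.dag_comp, D.dag_whiskerLeft, D.dag_whiskerRight, D.dag_assoc,
      D.dag_assoc_inv, D.dag_lUnit, YS.dag_eps, Category.assoc]
  set d := XS.comul ≫ (X ◁ f)
  calc copyApplyMul XS ZS (f ≫ g)
      = (d ▷ Z) ≫ (α_ X Y Z).hom ≫ (X ◁ ((g ▷ Z) ≫ ZS.mul)) := by
        simp only [copyApplyMul, d]
        monoidal
    _ = (d ▷ Z) ≫ (α_ X Y Z).hom ≫ (X ◁ ((Y ◁ u) ≫ (α_ Y Y (Y ⊗ Z)).inv ≫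
          (YS.mul ▷ (Y ⊗ Z)) ≫ (Y ◁ ((YS.comul ▷ Z) ≫ (α_ Y Y Z).hom ≫
          (Y ◁ ((g ▷ Z) ≫ ZS.mul)))) ≫ (α_ Y Y Z).inv ≫ (YS.eps ▷ Z) ≫ (λ_ Z).hom)) := by
        rw [hu, YS.snake_mul_comul_comp]
    _ = D.dag c ≫ (copyApplyMul XS YS f ⊗ₘ copyApplyMul YS ZS g) ≫ c := by
        rw [hc, MonoidalCategory.tensorHom_def]
        have hf : copyApplyMul XS YS f = (d ▷ Y) ≫ (α_ X Y Y).hom ≫ (X ◁ YS.mul) := by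
          simp only [copyApplyMul, d, comp_whiskerRight, Category.assoc]
        have hslide : (X ◁ u) ≫ (α_ X Y (Y ⊗ Z)).inv ≫ ((d ▷ Y) ▷ (Y ⊗ Z)) =
            (d ▷ Z) ≫ ((X ⊗ Y) ◁ u) ≫ (α_ (X ⊗ Y) Y (Y ⊗ Z)).inv := by
          rw [← associator_inv_naturality_left, whisker_exchange_assoc]
        simp only [hf, comp_whiskerRight, Category.assoc]
        rw [reassoc_of% hslide]
        simp only [c, copyApplyMul]
        monoidal

end CopyApplyMul

/-- classical morphisms form a category: identities are classical
and classical morphisms are closed under composition. -/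
theorem classical_morphisms_form_category (D : Dagger C) :
    (∀ (X : C) (XS : ClassicalStructure D X), IsClassical D XS XS (𝟙 X)) ∧
    (∀ (X Y Z : C) (XS : ClassicalStructure D X) (YS : ClassicalStructure D Y)
        (ZS : ClassicalStructure D Z) (f : X ⟶ Y) (g : Y ⟶ Z),
      IsClassical D XS YS f → IsClassical D YS ZS g →
      IsClassical D XS ZS (f ≫ g)) := by
  refine ⟨fun X XS => ?_, fun X Y Z XS YS ZS f g hf hg => ?_⟩
  · rw [isClassical_iff, copyApplyMul_id]
    exact D.isPositive_dag_comp_self XS.comul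
  · rw [isClassical_iff] at hf hg ⊢
    rw [copyApplyMul_comp XS YS ZS f g]
    exact (hf.tensor hg).dag_comp_comp _
end

section
/- A morphism between Frobenius algebras which is simultaneously a monoid homomorphism and a comonoid homomorphism is an isomorphism: if (X, ∇_X, ⊥_X, Δ_X, ⊤_X) and (Y, ∇_Y, ⊥_Y, Δ_Y, ⊤_Y) are Frobenius algebras in a monoidal category and f : X ⟶ Y satisfies (f ⊗ f) ≫ ∇_Y = ∇_X ≫ f, ⊥_X ≫ f = ⊥_Y, f ≫ Δ_Y = Δ_X ≫ (f ⊗ f), and f ≫ ⊤_Y = ⊤_X, then f is invertible. -/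
/-!
A Frobenius algebra `X` is self-dual: the cup `⊥ ≫ Δ` and the cap `∇ ≫ ⊤` satisfy a zigzag
identity, which follows from the unit law, the counit law and the Frobenius law. A morphism
that is both a monoid and a comonoid homomorphism carries cup to cup and cap to cap, so its
mate with respect to these pairings is a two-sided inverse: each composite collapses to a zigzag.
-/

open CategoryTheory MonoidalCategory

universe v u

namespace SelfPairing

variable {C : Type u} [Category.{v} C] [MonoidalCategory C]

def zigzag {X : C} (η : 𝟙_ C ⟶ X ⊗ X) (ε : X ⊗ X ⟶ 𝟙_ C) : X ⟶ X :=
  (λ_ X).inv ≫ η ▷ X ≫ (α_ X X X).hom ≫ X ◁ ε ≫ (ρ_ X).hom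

def mate {X Y : C} (ηX : 𝟙_ C ⟶ X ⊗ X) (εY : Y ⊗ Y ⟶ 𝟙_ C) (f : X ⟶ Y) : Y ⟶ X :=
  (λ_ Y).inv ≫ ηX ▷ Y ≫ (α_ X X Y).hom ≫ X ◁ (f ▷ Y ≫ εY) ≫ (ρ_ X).hom

lemma comp_mate {X Y : C} (ηX : 𝟙_ C ⟶ X ⊗ X) (εY : Y ⊗ Y ⟶ 𝟙_ C) (f : X ⟶ Y) :
    f ≫ mate ηX εY f = zigzag ηX ((f ⊗ₘ f) ≫ εY) := by
  rw [mate, zigzag, leftUnitor_inv_naturality_assoc, whisker_exchange_assoc,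
    associator_naturality_right_assoc, ← whiskerLeft_comp_assoc, tensorHom_def', Category.assoc]

lemma mate_comp {X Y : C} (ηX : 𝟙_ C ⟶ X ⊗ X) (εY : Y ⊗ Y ⟶ 𝟙_ C) (f : X ⟶ Y) :
    mate ηX εY f ≫ f = zigzag (ηX ≫ (f ⊗ₘ f)) εY := by
  simp only [mate, zigzag, Category.assoc, ← rightUnitor_naturality, whiskerLeft_comp]
  rw [whisker_exchange_assoc, whisker_exchange_assoc, ← associator_naturality_left_assoc,
    ← associator_naturality_middle_assoc]
  simp only [MonoidalCategory.tensorHom_def, comp_whiskerRight, Category.assoc]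

theorem isIso_of_preserves_cup_cap {X Y : C} {ηX : 𝟙_ C ⟶ X ⊗ X} {εX : X ⊗ X ⟶ 𝟙_ C}
    {ηY : 𝟙_ C ⟶ Y ⊗ Y} {εY : Y ⊗ Y ⟶ 𝟙_ C}
    (hX : zigzag ηX εX = 𝟙 X) (hY : zigzag ηY εY = 𝟙 Y) (f : X ⟶ Y)
    (hη : ηX ≫ (f ⊗ₘ f) = ηY) (hε : (f ⊗ₘ f) ≫ εY = εX) : IsIso f :=
  ⟨mate ηX εY f, by rw [comp_mate, hε, hX], by rw [mate_comp, hη, hY]⟩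

end SelfPairing

open SelfPairing

lemma frobenius_zigzag {C : Type u} [Category.{v} C] [MonoidalCategory C] {X : C}
    {mul : X ⊗ X ⟶ X} {unit : 𝟙_ C ⟶ X} {comul : X ⟶ X ⊗ X} {counit : X ⟶ 𝟙_ C}
    (one_mul : (unit ⊗ₘ 𝟙 X) ≫ mul = (λ_ X).hom)
    (comul_counit : comul ≫ (𝟙 X ⊗ₘ counit) ≫ (ρ_ X).hom = 𝟙 X)
    (frob : (comul ⊗ₘ 𝟙 X) ≫ (α_ X X X).hom ≫ (𝟙 X ⊗ₘ mul) = mul ≫ comul) :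
    zigzag (unit ≫ comul) (mul ≫ counit) = 𝟙 X := by
  simp only [tensorHom_id, id_tensorHom] at one_mul comul_counit frob
  calc zigzag (unit ≫ comul) (mul ≫ counit)
      = (λ_ X).inv ≫ (unit ▷ X ≫ comul ▷ X ≫ (α_ X X X).hom ≫ X ◁ mul) ≫
          X ◁ counit ≫ (ρ_ X).hom := by simp [zigzag]
    _ = 𝟙 X := by rw [frob, ← Category.assoc (unit ▷ X), one_mul, Category.assoc, Iso.inv_hom_id_assoc,
          comul_counit]

theorem frobenius_mon_comon_hom_is_iso_general {C : Type u} [Category.{v} C]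
    [MonoidalCategory C] {X Y : C}
    (mulX : X ⊗ X ⟶ X) (unitX : 𝟙_ C ⟶ X)
    (comulX : X ⟶ X ⊗ X) (counitX : X ⟶ 𝟙_ C)
    (mulY : Y ⊗ Y ⟶ Y) (unitY : 𝟙_ C ⟶ Y)
    (comulY : Y ⟶ Y ⊗ Y) (counitY : Y ⟶ 𝟙_ C)
    (one_mulX : (unitX ⊗ₘ 𝟙 X) ≫ mulX = (λ_ X).hom)
    (comul_counitX : comulX ≫ (𝟙 X ⊗ₘ counitX) ≫ (ρ_ X).hom = 𝟙 X)
    (frobX2 : (comulX ⊗ₘ 𝟙 X) ≫ (α_ X X X).hom ≫ (𝟙 X ⊗ₘ mulX) = mulX ≫ comulX)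
    (one_mulY : (unitY ⊗ₘ 𝟙 Y) ≫ mulY = (λ_ Y).hom)
    (comul_counitY : comulY ≫ (𝟙 Y ⊗ₘ counitY) ≫ (ρ_ Y).hom = 𝟙 Y)
    (frobY2 : (comulY ⊗ₘ 𝟙 Y) ≫ (α_ Y Y Y).hom ≫ (𝟙 Y ⊗ₘ mulY) = mulY ≫ comulY)
    (f : X ⟶ Y)
    (hmul : (f ⊗ₘ f) ≫ mulY = mulX ≫ f)
    (hunit : unitX ≫ f = unitY)
    (hcomul : f ≫ comulY = comulX ≫ (f ⊗ₘ f))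
    (hcounit : f ≫ counitY = counitX) :
    IsIso f := by
  refine isIso_of_preserves_cup_cap (frobenius_zigzag one_mulX comul_counitX frobX2)
    (frobenius_zigzag one_mulY comul_counitY frobY2) f ?_ ?_
  · rw [Category.assoc, ← hcomul, ← Category.assoc, hunit]
  · rw [← Category.assoc, hmul, Category.assoc, hcounit]

/-- a morphism between Frobenius algebras which is both a monoid
homomorphism and a comonoid homomorphism is an isomorphism. -/
theorem frobenius_mon_comon_hom_is_iso {C : Type u} [Category.{v} C]
    [MonoidalCategory C] {X Y : C}
    (mulX : X ⊗ X ⟶ X) (unitX : 𝟙_ C ⟶ X)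
    (comulX : X ⟶ X ⊗ X) (counitX : X ⟶ 𝟙_ C)
    (mulY : Y ⊗ Y ⟶ Y) (unitY : 𝟙_ C ⟶ Y)
    (comulY : Y ⟶ Y ⊗ Y) (counitY : Y ⟶ 𝟙_ C)
    (mul_assocX : (α_ X X X).hom ≫ (𝟙 X ⊗ₘ mulX) ≫ mulX = (mulX ⊗ₘ 𝟙 X) ≫ mulX)
    (one_mulX : (unitX ⊗ₘ 𝟙 X) ≫ mulX = (λ_ X).hom)
    (mul_oneX : (𝟙 X ⊗ₘ unitX) ≫ mulX = (ρ_ X).hom)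
    (coassocX : comulX ≫ (comulX ⊗ₘ 𝟙 X) ≫ (α_ X X X).hom = comulX ≫ (𝟙 X ⊗ₘ comulX))
    (counit_comulX : comulX ≫ (counitX ⊗ₘ 𝟙 X) ≫ (λ_ X).hom = 𝟙 X)
    (comul_counitX : comulX ≫ (𝟙 X ⊗ₘ counitX) ≫ (ρ_ X).hom = 𝟙 X)
    (frobX1 : (𝟙 X ⊗ₘ comulX) ≫ (α_ X X X).inv ≫ (mulX ⊗ₘ 𝟙 X) = mulX ≫ comulX)
    (frobX2 : (comulX ⊗ₘ 𝟙 X) ≫ (α_ X X X).hom ≫ (𝟙 X ⊗ₘ mulX) = mulX ≫ comulX)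
    (mul_assocY : (α_ Y Y Y).hom ≫ (𝟙 Y ⊗ₘ mulY) ≫ mulY = (mulY ⊗ₘ 𝟙 Y) ≫ mulY)
    (one_mulY : (unitY ⊗ₘ 𝟙 Y) ≫ mulY = (λ_ Y).hom)
    (mul_oneY : (𝟙 Y ⊗ₘ unitY) ≫ mulY = (ρ_ Y).hom)
    (coassocY : comulY ≫ (comulY ⊗ₘ 𝟙 Y) ≫ (α_ Y Y Y).hom = comulY ≫ (𝟙 Y ⊗ₘ comulY))
    (counit_comulY : comulY ≫ (counitY ⊗ₘ 𝟙 Y) ≫ (λ_ Y).hom = 𝟙 Y)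
    (comul_counitY : comulY ≫ (𝟙 Y ⊗ₘ counitY) ≫ (ρ_ Y).hom = 𝟙 Y)
    (frobY1 : (𝟙 Y ⊗ₘ comulY) ≫ (α_ Y Y Y).inv ≫ (mulY ⊗ₘ 𝟙 Y) = mulY ≫ comulY)
    (frobY2 : (comulY ⊗ₘ 𝟙 Y) ≫ (α_ Y Y Y).hom ≫ (𝟙 Y ⊗ₘ mulY) = mulY ≫ comulY)
    (f : X ⟶ Y)
    (hmul : (f ⊗ₘ f) ≫ mulY = mulX ≫ f)
    (hunit : unitX ≫ f = unitY)
    (hcomul : f ≫ comulY = comulX ≫ (f ⊗ₘ f))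
    (hcounit : f ≫ counitY = counitX) :
    IsIso f :=
  frobenius_mon_comon_hom_is_iso_general mulX unitX comulX counitX mulY unitY comulY counitY
    one_mulX comul_counitX frobX2 one_mulY comul_counitY frobY2 f hmul hunit hcomul hcounit
end

section
/- Let φ : X ⟶ Y be a morphism between classical structures and for each object A define ℘φ : Hom(Y ⊗ A, B) ⟶ Hom(X ⊗ A, B) by ℘φ(g) := (φ ⊗ 𝟙_A) ≫ g. Then ℘φ is functorial for the coKleisli structures — i.e. for every object A, ℘φ((⊤_Y ⊗ 𝟙_A) ≫ λ_A) = (⊤_X ⊗ 𝟙_A) ≫ λ_A, and for all f : Y ⊗ A ⟶ B and g : Y ⊗ B ⟶ C, ℘φ((Δ_Y ⊗ 𝟙_A) ≫ (𝟙_Y ⊗ f) ≫ g) = (Δ_X ⊗ 𝟙_A) ≫ (𝟙_X ⊗ ℘φ(f)) ≫ ℘φ(g) — if and only if φ is a comonoid homomorphism, i.e. φ ≫ Δ_Y = Δ_X ≫ (φ ⊗ φ) and φ ≫ ⊤_Y = ⊤_X. -/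
open CategoryTheory MonoidalCategory

universe v u

variable {C : Type u} [Category.{v} C] [MonoidalCategory C] [SymmetricCategory C]

/-!
Sufficiency is naturality of the associator and the interchange law. For necessity,
instantiate the unit law at `A = 𝟙_` and the composition law at `A = 𝟙_`, `f = ρ_Y`, `g = 𝟙`:
both sides then become `ρ_X` followed by the two sides of the comonoid-homomorphism equation,
and `ρ_X` is an iso.
-/

section CoKleisli

variable {M : Type*} [Category M] [MonoidalCategory M]

def coKleisliComp {X A B E : M} (δ : X ⟶ X ⊗ X) (f : X ⊗ A ⟶ B) (g : X ⊗ B ⟶ E) :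
    X ⊗ A ⟶ E :=
  (δ ⊗ₘ 𝟙 A) ≫ (α_ X X A).hom ≫ (𝟙 X ⊗ₘ f) ≫ g

def coKleisliId {X : M} (ε : X ⟶ 𝟙_ M) (A : M) : X ⊗ A ⟶ A :=
  (ε ⊗ₘ 𝟙 A) ≫ (λ_ A).hom

def reindex {X Y A B : M} (φ : X ⟶ Y) (g : Y ⊗ A ⟶ B) : X ⊗ A ⟶ B :=
  (φ ⊗ₘ 𝟙 A) ≫ g

variable {X Y : M} (φ : X ⟶ Y)

theorem reindex_coKleisliId (ε : Y ⟶ 𝟙_ M) (A : M) :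
    reindex φ (coKleisliId ε A) = coKleisliId (φ ≫ ε) A := by
  rw [reindex, coKleisliId, coKleisliId, ← Category.assoc, tensorHom_comp_tensorHom,
    Category.comp_id]

theorem coKleisliId_tensorUnit {Z : M} (ε : Z ⟶ 𝟙_ M) :
    coKleisliId ε (𝟙_ M) = (ρ_ Z).hom ≫ ε := by
  rw [coKleisliId, tensorHom_id, unitors_equal, rightUnitor_naturality]

theorem reindex_coKleisliId_iff (εX : X ⟶ 𝟙_ M) (εY : Y ⟶ 𝟙_ M) :
    (∀ A : M, reindex φ (coKleisliId εY A) = coKleisliId εX A) ↔ φ ≫ εY = εX := by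
  refine ⟨fun h => ?_, fun h A => by rw [reindex_coKleisliId, h]⟩
  have h₁ := h (𝟙_ M)
  rw [reindex_coKleisliId, coKleisliId_tensorUnit, coKleisliId_tensorUnit] at h₁
  exact (cancel_epi (ρ_ X).hom).mp h₁

theorem reindex_coKleisliComp_rightUnitor (δ : Y ⟶ Y ⊗ Y) :
    reindex φ (coKleisliComp δ (ρ_ Y).hom (𝟙 (Y ⊗ Y))) = (ρ_ X).hom ≫ φ ≫ δ := by
  simp [reindex, coKleisliComp]

theorem coKleisliComp_reindex_rightUnitor (δ : X ⟶ X ⊗ X) :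
    coKleisliComp δ (reindex φ (ρ_ Y).hom) (reindex φ (𝟙 (Y ⊗ Y))) =
      (ρ_ X).hom ≫ δ ≫ (φ ⊗ₘ φ) := by
  simp [reindex, coKleisliComp, tensorHom_def']

theorem reindex_coKleisliComp {δX : X ⟶ X ⊗ X} {δY : Y ⟶ Y ⊗ Y}
    (h : φ ≫ δY = δX ≫ (φ ⊗ₘ φ)) {A B E : M} (f : Y ⊗ A ⟶ B) (g : Y ⊗ B ⟶ E) :
    reindex φ (coKleisliComp δY f g) = coKleisliComp δX (reindex φ f) (reindex φ g) :=
  calc (φ ⊗ₘ 𝟙 A) ≫ (δY ⊗ₘ 𝟙 A) ≫ (α_ Y Y A).hom ≫ (𝟙 Y ⊗ₘ f) ≫ g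
      = (δX ⊗ₘ 𝟙 A) ≫ ((φ ⊗ₘ φ) ⊗ₘ 𝟙 A) ≫ (α_ Y Y A).hom ≫ (𝟙 Y ⊗ₘ f) ≫ g := by
        simp only [tensorHom_comp_tensorHom_assoc, h, Category.comp_id]
    _ = (δX ⊗ₘ 𝟙 A) ≫ (α_ X X A).hom ≫ (φ ⊗ₘ ((φ ⊗ₘ 𝟙 A) ≫ f)) ≫ g := by
        rw [associator_naturality_assoc, tensorHom_comp_tensorHom_assoc, Category.comp_id]
    _ = (δX ⊗ₘ 𝟙 A) ≫ (α_ X X A).hom ≫ (𝟙 X ⊗ₘ ((φ ⊗ₘ 𝟙 A) ≫ f)) ≫ (φ ⊗ₘ 𝟙 B) ≫ g := by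
        rw [tensorHom_comp_tensorHom_assoc, Category.id_comp, Category.comp_id]

theorem reindex_coKleisliComp_iff (δX : X ⟶ X ⊗ X) (δY : Y ⟶ Y ⊗ Y) :
    (∀ (A B E : M) (f : Y ⊗ A ⟶ B) (g : Y ⊗ B ⟶ E),
        reindex φ (coKleisliComp δY f g) = coKleisliComp δX (reindex φ f) (reindex φ g)) ↔
      φ ≫ δY = δX ≫ (φ ⊗ₘ φ) := by
  refine ⟨fun h => ?_, fun h A B E f g => reindex_coKleisliComp φ h f g⟩
  have h₁ := h (𝟙_ M) Y (Y ⊗ Y) (ρ_ Y).hom (𝟙 (Y ⊗ Y))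
  rw [reindex_coKleisliComp_rightUnitor, coKleisliComp_reindex_rightUnitor] at h₁
  exact (cancel_epi (ρ_ X).hom).mp h₁

end CoKleisli

/-- `℘φ(g) := (φ ⊗ 𝟙_A) ≫ g` is functorial for the coKleisli
structures if and only if `φ` is a comonoid homomorphism. -/
theorem indexing_functorial_iff_comonoid_hom {X Y : C} (D : Dagger C)
    (XS : ClassicalStructure D X) (YS : ClassicalStructure D Y) (φ : X ⟶ Y) :
    ((∀ A : C,
        (φ ⊗ₘ 𝟙 A) ≫ (YS.counit ⊗ₘ 𝟙 A) ≫ (λ_ A).hom =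
          (XS.counit ⊗ₘ 𝟙 A) ≫ (λ_ A).hom) ∧
      (∀ (A B E : C) (f : Y ⊗ A ⟶ B) (g : Y ⊗ B ⟶ E),
        (φ ⊗ₘ 𝟙 A) ≫ (YS.comul ⊗ₘ 𝟙 A) ≫ (α_ Y Y A).hom ≫ (𝟙 Y ⊗ₘ f) ≫ g =
          (XS.comul ⊗ₘ 𝟙 A) ≫ (α_ X X A).hom ≫ (𝟙 X ⊗ₘ ((φ ⊗ₘ 𝟙 A) ≫ f)) ≫
            ((φ ⊗ₘ 𝟙 B) ≫ g))) ↔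
    (φ ≫ YS.comul = XS.comul ≫ (φ ⊗ₘ φ) ∧ φ ≫ YS.counit = XS.counit) :=
  (and_congr (reindex_coKleisliId_iff φ XS.counit YS.counit)
    (reindex_coKleisliComp_iff φ XS.comul YS.comul)).trans and_comm
end
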